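/- Let b ∈ ℝ^d have all nonzero coordinates and Q ∈ ℝ^{d×d} be symmetric positive definite. Then there exists ε₀ > 0 such that for all 0 ≤ ε < ε₀, the maximum of bᵀΔ + ε ΔᵀQΔ over ‖Δ‖_∞ ≤ 1 equals ‖b‖₁ + ε·sign(b)ᵀ Q sign(b), attained at Δ = sign(b). -/
import Mathlib

open Matrix

lemma dot_bound_aux {d : ℕ} (Q : Matrix (Fin d) (Fin d) ℝ) (u v : Fin d → ℝ)
    (A C : ℝ) (hA : 0 ≤ A) (hC : 0 ≤ C) (hu : ∀ i, |u i| ≤ A) (hv : ∀ j, |v j| ≤ C) :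
    |u ⬝ᵥ Q.mulVec v| ≤ (∑ i, ∑ j, |Q i j|) * A * C := by
  have h1 : |u ⬝ᵥ Q.mulVec v| ≤ ∑ i, ∑ j, |u i| * (|Q i j| * |v j|) := by
    calc |u ⬝ᵥ Q.mulVec v| = |∑ i, u i * ∑ j, Q i j * v j| := rfl
    _ ≤ ∑ i, |u i * ∑ j, Q i j * v j| := Finset.abs_sum_le_sum_abs _ _
    _ ≤ ∑ i, ∑ j, |u i| * (|Q i j| * |v j|) := by
        apply Finset.sum_le_sum
        intro i _
        rw [abs_mul, ← Finset.mul_sum]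
        apply mul_le_mul_of_nonneg_left _ (abs_nonneg _)
        calc |∑ j, Q i j * v j| ≤ ∑ j, |Q i j * v j| := Finset.abs_sum_le_sum_abs _ _
        _ = ∑ j, |Q i j| * |v j| := by simp [abs_mul]
  refine h1.trans ?_
  have h2 : ∀ i ∈ Finset.univ, ∑ j, |u i| * (|Q i j| * |v j|) ≤ ∑ j, |Q i j| * A * C := by
    intro i _
    apply Finset.sum_le_sum
    intro j _
    have := mul_le_mul (hu i) (mul_le_mul_of_nonneg_left (hv j) (abs_nonneg (Q i j)))
      (by positivity) hA
    nlinarith [abs_nonneg (Q i j)]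
  refine (Finset.sum_le_sum h2).trans_eq ?_
  rw [Finset.sum_mul, Finset.sum_mul]
  congr 1; ext i
  rw [Finset.sum_mul, Finset.sum_mul]

/-- For `b` with nonzero coordinates and `Q` positive definite, for all sufficiently
small `ε ≥ 0`, the maximum over the `ℓ∞` unit ball of `bᵀΔ + ε ΔᵀQΔ` equals
`‖b‖₁ + ε·sign(b)ᵀQ·sign(b)`, attained at `Δ = sign(b)`. -/
theorem stmt6 {d : ℕ} (b : Fin d → ℝ) (hb : ∀ i, b i ≠ 0)
    (Q : Matrix (Fin d) (Fin d) ℝ) (hQ : Q.PosDef) :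
    ∃ ε₀ > (0 : ℝ), ∀ ε : ℝ, 0 ≤ ε → ε < ε₀ →
      IsGreatest
        {y : ℝ | ∃ Δ : Fin d → ℝ, (∀ i, |Δ i| ≤ 1) ∧
          y = b ⬝ᵥ Δ + ε * (Δ ⬝ᵥ Q.mulVec Δ)}
        ((∑ i, |b i|) +
          ε * ((fun i => Real.sign (b i)) ⬝ᵥ Q.mulVec (fun i => Real.sign (b i)))) ∧
      (∀ i, |Real.sign (b i)| ≤ 1) ∧
      b ⬝ᵥ (fun i => Real.sign (b i)) +
          ε * ((fun i => Real.sign (b i)) ⬝ᵥ Q.mulVec (fun i => Real.sign (b i))) =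
        (∑ i, |b i|) +
          ε * ((fun i => Real.sign (b i)) ⬝ᵥ Q.mulVec (fun i => Real.sign (b i))) := by
  set s : Fin d → ℝ := fun i => Real.sign (b i) with hs
  have hscase : ∀ i, s i = 1 ∨ s i = -1 := by
    intro i
    rcases lt_or_gt_of_ne (hb i) with h | h
    · right; simp [hs, Real.sign_of_neg h]
    · left; simp [hs, Real.sign_of_pos h]
  have hs1 : ∀ i, |s i| ≤ 1 := by
    intro i; rcases hscase i with h | h <;> simp [h]
  have hbs : ∀ i, b i * s i = |b i| := by
    intro i
    rcases lt_or_gt_of_ne (hb i) with h | h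
    · simp [hs, Real.sign_of_neg h, abs_of_neg h]
    · simp [hs, Real.sign_of_pos h, abs_of_pos h]
  have hdot : b ⬝ᵥ s = ∑ i, |b i| := by
    simp only [dotProduct]
    exact Finset.sum_congr rfl fun i _ => hbs i
  obtain ⟨m, hm0, hm⟩ : ∃ m > (0:ℝ), ∀ i, m ≤ |b i| := by
    rcases isEmpty_or_nonempty (Fin d) with h | h
    · exact ⟨1, one_pos, fun i => h.elim i⟩
    · refine ⟨Finset.univ.inf' Finset.univ_nonempty (fun i => |b i|), ?_, ?_⟩
      · exact (Finset.lt_inf'_iff _).mpr fun i _ => abs_pos.mpr (hb i)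
      · exact fun i => Finset.inf'_le _ (Finset.mem_univ i)
  set M : ℝ := ∑ i, ∑ j, |Q i j| with hMdef
  have hM : 0 ≤ M := by positivity
  refine ⟨m / (2 * M + 1), by positivity, fun ε hε hεlt => ?_⟩
  have hεm : ε * (2 * M + 1) < m := by
    exact (lt_div_iff₀ (by positivity)).mp hεlt
  constructor
  · constructor
    · exact ⟨s, hs1, by rw [hdot]⟩
    · rintro y ⟨Δ, hΔ, rfl⟩
      set T : ℝ := ∑ j, |Δ j - s j| with hT
      have hT0 : 0 ≤ T := Finset.sum_nonneg fun j _ => abs_nonneg _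
      have hTj : ∀ j, |Δ j - s j| ≤ T :=
        fun j => Finset.single_le_sum (f := fun j => |Δ j - s j|)
          (fun j _ => abs_nonneg _) (Finset.mem_univ j)
      -- quadratic bound
      have hsplit : Δ ⬝ᵥ Q.mulVec Δ - s ⬝ᵥ Q.mulVec s
          = Δ ⬝ᵥ Q.mulVec (Δ - s) + (Δ - s) ⬝ᵥ Q.mulVec s := by
        simp [Matrix.mulVec_sub, dotProduct_sub, sub_dotProduct]
      have h1 := dot_bound_aux Q Δ (Δ - s) 1 T zero_le_one hT0 hΔ
        (fun j => hTj j)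
      have h2 := dot_bound_aux Q (Δ - s) s T 1 hT0 zero_le_one (fun j => hTj j) hs1
      have hquad : Δ ⬝ᵥ Q.mulVec Δ - s ⬝ᵥ Q.mulVec s ≤ 2 * M * T := by
        rw [hsplit]
        have := abs_le.mp h1
        have := abs_le.mp h2
        nlinarith [abs_le.mp h1, abs_le.mp h2]
      -- linear bound
      have hlin : m * T ≤ (∑ i, |b i|) - b ⬝ᵥ Δ := by
        have : (∑ i, |b i|) - b ⬝ᵥ Δ = ∑ i, (|b i| - b i * Δ i) := by
          simp [dotProduct, Finset.sum_sub_distrib]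
        rw [this, hT, Finset.mul_sum]
        apply Finset.sum_le_sum
        intro i _
        have habs : |b i| - b i * Δ i = |b i| * |Δ i - s i| := by
          rcases lt_or_gt_of_ne (hb i) with h | h
          · have hsi : s i = -1 := by simp [hs, Real.sign_of_neg h]
            have h1 : -1 ≤ Δ i := neg_le_of_abs_le (hΔ i)
            rw [hsi, abs_of_neg h, show Δ i - (-1:ℝ) = Δ i + 1 by ring,
              abs_of_nonneg (by linarith)]
            ring
          · have hsi : s i = 1 := by simp [hs, Real.sign_of_pos h]
            have h1 : Δ i ≤ 1 := le_of_abs_le (hΔ i)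
            have h2 : |Δ i - 1| = 1 - Δ i := by
              rw [abs_sub_comm]; exact abs_of_nonneg (by linarith)
            rw [hsi, abs_of_pos h, h2]; ring
        rw [habs]
        exact mul_le_mul_of_nonneg_right (hm i) (abs_nonneg _)
      -- combine
      have key : ε * (Δ ⬝ᵥ Q.mulVec Δ - s ⬝ᵥ Q.mulVec s) ≤ m * T := by
        calc ε * (Δ ⬝ᵥ Q.mulVec Δ - s ⬝ᵥ Q.mulVec s) ≤ ε * (2 * M * T) :=
          mul_le_mul_of_nonneg_left hquad hε
        _ ≤ m * T := by nlinarith [mul_nonneg hε hT0]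
      nlinarith [key, hlin]
  · exact ⟨hs1, by rw [hdot]⟩
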